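/- Let C be a finite set of points in ℝ^D, let x ∈ C, and suppose x lies in the affine span of C \ {x}. Consider the feasible set W = {w : C \ {x} → ℝ | ∑_y w(y) = 1 and ∑_y w(y)·y = x}. Then the ℓ1 norm ‖w‖₁ = ∑_y |w(y)| attains its minimum over W, and this minimum equals 1 if x ∈ H(C \ {x}), while this minimum is strictly greater than 1 if x ∉ H(C \ {x}) (i.e., if x is a vertex of H(C)). -/
import Mathlib


open scoped Classical

/-- if `x ∈ C` lies in the affine span of `C \ {x}`, then over the feasible
set `W` of affine representations of `x` by `C \ {x}`, the `ℓ1` norm attains its minimum;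
the minimum equals `1` when `x ∈ H(C \ {x})` and is strictly greater than `1` otherwise. -/
theorem l1_minimum_over_affine_representations {D : ℕ}
    (C : Finset (EuclideanSpace ℝ (Fin D))) (x : EuclideanSpace ℝ (Fin D)) (hx : x ∈ C)
    (hspan : x ∈ affineSpan ℝ (↑(C.erase x) : Set (EuclideanSpace ℝ (Fin D)))) :
    ∃ w : EuclideanSpace ℝ (Fin D) → ℝ,
      ((∑ y ∈ C.erase x, w y = 1) ∧ (∑ y ∈ C.erase x, w y • y = x)) ∧
      (∀ v : EuclideanSpace ℝ (Fin D) → ℝ,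
        (∑ y ∈ C.erase x, v y = 1) → (∑ y ∈ C.erase x, v y • y = x) →
        ∑ y ∈ C.erase x, |w y| ≤ ∑ y ∈ C.erase x, |v y|) ∧
      (x ∈ convexHull ℝ (↑(C.erase x) : Set (EuclideanSpace ℝ (Fin D))) →
        ∑ y ∈ C.erase x, |w y| = 1) ∧
      (x ∉ convexHull ℝ (↑(C.erase x) : Set (EuclideanSpace ℝ (Fin D))) →
        1 < ∑ y ∈ C.erase x, |w y|) := by
  classical
  set S := C.erase x with hS
  -- Step 1: get a feasible point as a function on the subtype
  have hspan' : x ∈ affineSpan ℝ (Set.range ((↑) : ↥S → EuclideanSpace ℝ (Fin D))) := by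
    have hr : Set.range ((↑) : ↥S → EuclideanSpace ℝ (Fin D)) = (↑S : Set (EuclideanSpace ℝ (Fin D))) := by
      ext y; simp
    rw [hr]; exact hspan
  obtain ⟨p0, hp0sum, hp0eq⟩ :=
    eq_affineCombination_of_mem_affineSpan_of_fintype hspan'
  rw [Finset.affineCombination_eq_linear_combination _ _ _ hp0sum] at hp0eq
  -- the feasible set and the objective
  set A : Set (↥S → ℝ) :=
    {p | ∑ i, p i = 1 ∧ ∑ i, p i • (i : EuclideanSpace ℝ (Fin D)) = x} with hA
  set F : (↥S → ℝ) → ℝ := fun p => ∑ i, |p i| with hF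
  have hp0A : p0 ∈ A := ⟨hp0sum, hp0eq.symm⟩
  have hFcont : Continuous F :=
    continuous_finset_sum _ fun i _ => (continuous_apply i).abs
  have hAclosed : IsClosed A := by
    have h1 : IsClosed {p : ↥S → ℝ | ∑ i, p i = 1} :=
      isClosed_eq (continuous_finset_sum _ fun i _ => continuous_apply i) continuous_const
    have h2 : IsClosed {p : ↥S → ℝ | ∑ i, p i • (i : EuclideanSpace ℝ (Fin D)) = x} :=
      isClosed_eq (continuous_finset_sum _ fun i _ =>
        (continuous_apply i).smul continuous_const) continuous_const
    exact h1.inter h2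
  set K : Set (↥S → ℝ) := A ∩ {p | F p ≤ F p0} with hK
  have hKclosed : IsClosed K := hAclosed.inter (isClosed_le hFcont continuous_const)
  have hKbdd : Bornology.IsBounded K := by
    have : K ⊆ Metric.closedBall 0 (F p0) := by
      intro p hp
      rw [Metric.mem_closedBall, dist_zero_right]
      refine pi_norm_le_iff_of_nonneg ?_ |>.2 fun i => ?_
      · exact le_trans (Finset.sum_nonneg fun i _ => abs_nonneg _) hp.2
      · refine le_trans ?_ hp.2
        exact Finset.single_le_sum (fun j _ => abs_nonneg (p j)) (Finset.mem_univ i)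
    exact (Metric.isBounded_closedBall).subset this
  have hKcompact : IsCompact K := Metric.isCompact_of_isClosed_isBounded hKclosed hKbdd
  have hp0K : p0 ∈ K := ⟨hp0A, le_refl (F p0)⟩
  have hKne : K.Nonempty := ⟨p0, hp0K⟩
  obtain ⟨q, hqK, hqmin⟩ := hKcompact.exists_isMinOn hKne hFcont.continuousOn
  have hqminA : ∀ p ∈ A, F q ≤ F p := by
    intro p hp
    by_cases h : F p ≤ F p0
    · exact hqmin ⟨hp, h⟩
    · have h0 : F q ≤ F p0 := hqmin hp0K
      exact h0.trans (not_le.1 h).le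
  -- define w on the ambient space
  set w : EuclideanSpace ℝ (Fin D) → ℝ := fun y => if h : y ∈ S then q ⟨y, h⟩ else 0 with hw
  -- conversion lemmas
  have conv1 : ∀ v : EuclideanSpace ℝ (Fin D) → ℝ, ∑ y ∈ S, v y = ∑ i : ↥S, v ↑i := fun v =>
    (Finset.sum_coe_sort S v).symm
  have conv2 : ∀ v : EuclideanSpace ℝ (Fin D) → ℝ, ∑ y ∈ S, v y • y = ∑ i : ↥S, v ↑i • (↑i : EuclideanSpace ℝ (Fin D)) := fun v =>
    (Finset.sum_coe_sort S (fun y => v y • y)).symm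
  have hwq : ∀ i : ↥S, w ↑i = q i := by
    intro i
    simp only [hw, dif_pos i.2]
  have hwsum : ∑ y ∈ S, w y = ∑ i, q i := by
    rw [conv1]; exact Finset.sum_congr rfl fun i _ => hwq i
  have hwcomb : ∑ y ∈ S, w y • y = ∑ i, q i • (↑i : EuclideanSpace ℝ (Fin D)) := by
    rw [conv2]; exact Finset.sum_congr rfl fun i _ => by rw [hwq i]
  have hwabs : ∑ y ∈ S, |w y| = F q := by
    rw [conv1 (fun y => |w y|)]
    exact Finset.sum_congr rfl fun i _ => by rw [hwq i]
  have hwfeas1 : ∑ y ∈ S, w y = 1 := by rw [hwsum]; exact hqK.1.1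
  have hwfeas2 : ∑ y ∈ S, w y • y = x := by rw [hwcomb]; exact hqK.1.2
  -- minimality
  have hmin : ∀ v : EuclideanSpace ℝ (Fin D) → ℝ, (∑ y ∈ S, v y = 1) → (∑ y ∈ S, v y • y = x) →
      ∑ y ∈ S, |w y| ≤ ∑ y ∈ S, |v y| := by
    intro v hv1 hv2
    have hvA : (fun i : ↥S => v ↑i) ∈ A := by
      constructor
      · rw [← conv1]; exact hv1
      · rw [← conv2]; exact hv2
    have : ∑ y ∈ S, |v y| = F (fun i : ↥S => v ↑i) := by
      exact conv1 (fun y => |v y|)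
    rw [hwabs, this]
    exact hqminA _ hvA
  -- lower bound 1
  have hge1 : 1 ≤ ∑ y ∈ S, |w y| := by
    calc 1 = |∑ y ∈ S, w y| := by rw [hwfeas1]; norm_num
    _ ≤ ∑ y ∈ S, |w y| := Finset.abs_sum_le_sum_abs _ _
  refine ⟨w, ⟨hwfeas1, hwfeas2⟩, hmin, ?_, ?_⟩
  · intro hconv
    obtain ⟨u, hu0, hu1, hu2⟩ := Finset.mem_convexHull'.1 hconv
    have hle : ∑ y ∈ S, |w y| ≤ ∑ y ∈ S, |u y| := hmin u hu1 hu2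
    have : ∑ y ∈ S, |u y| = 1 := by
      rw [← hu1]; exact Finset.sum_congr rfl fun y hy => abs_of_nonneg (hu0 y hy)
    exact le_antisymm (this ▸ hle) hge1
  · intro hnconv
    refine lt_of_le_of_ne hge1 fun heq => hnconv ?_
    have hnn : ∀ y ∈ S, 0 ≤ w y := by
      have hz : ∑ y ∈ S, (|w y| - w y) = 0 := by
        rw [Finset.sum_sub_distrib, hwfeas1, ← heq, sub_self]
      intro y hy
      have := (Finset.sum_eq_zero_iff_of_nonneg fun z _ =>
        sub_nonneg.2 (le_abs_self (w z))).1 hz y hy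
      have : w y = |w y| := by linarith
      rw [this]; exact abs_nonneg _
    exact Finset.mem_convexHull'.2 ⟨w, hnn, hwfeas1, hwfeas2⟩
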